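/- arXiv:math/0108092 — 4 statements merged into one kernel-verified Lean document; each statement's English description precedes it below -/
import Mathlib

section
/- If A, B, C, D are elements of SU(2) with ABCD = I, then setting a = tr A, b = tr B, c = tr C, d = tr D, x = tr(AB), y = tr(BC), z = tr(CA), the Fricke relation holds: x² + y² + z² + xyz = (ab+cd)x + (ad+bc)y + (ac+bd)z − (a² + b² + c² + d² + abcd − 4). -/
theorem su2_fricke_relation
    (A B C D : Matrix.specialUnitaryGroup (Fin 2) ℂ)
    (h : A * B * C * D = 1)
    (a b c d x y z : ℂ)
    (ha : a = Matrix.trace (A : Matrix (Fin 2) (Fin 2) ℂ))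
    (hb : b = Matrix.trace (B : Matrix (Fin 2) (Fin 2) ℂ))
    (hc : c = Matrix.trace (C : Matrix (Fin 2) (Fin 2) ℂ))
    (hd : d = Matrix.trace (D : Matrix (Fin 2) (Fin 2) ℂ))
    (hx : x = Matrix.trace ((A * B : Matrix.specialUnitaryGroup (Fin 2) ℂ) : Matrix (Fin 2) (Fin 2) ℂ))
    (hy : y = Matrix.trace ((B * C : Matrix.specialUnitaryGroup (Fin 2) ℂ) : Matrix (Fin 2) (Fin 2) ℂ))
    (hz : z = Matrix.trace ((C * A : Matrix.specialUnitaryGroup (Fin 2) ℂ) : Matrix (Fin 2) (Fin 2) ℂ)) :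
    x ^ 2 + y ^ 2 + z ^ 2 + x * y * z
      = (a * b + c * d) * x + (a * d + b * c) * y + (a * c + b * d) * z
        - (a ^ 2 + b ^ 2 + c ^ 2 + d ^ 2 + a * b * c * d - 4) := by
  have hA : (A : Matrix (Fin 2) (Fin 2) ℂ).det = 1 := (Matrix.mem_specialUnitaryGroup_iff.mp A.2).2
  have hB : (B : Matrix (Fin 2) (Fin 2) ℂ).det = 1 := (Matrix.mem_specialUnitaryGroup_iff.mp B.2).2
  have hC : (C : Matrix (Fin 2) (Fin 2) ℂ).det = 1 := (Matrix.mem_specialUnitaryGroup_iff.mp C.2).2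
  have hprod : (A : Matrix (Fin 2) (Fin 2) ℂ) * (B : Matrix (Fin 2) (Fin 2) ℂ) * (C : Matrix (Fin 2) (Fin 2) ℂ) * (D : Matrix (Fin 2) (Fin 2) ℂ) = 1 := by
    have := congrArg (fun X : Matrix.specialUnitaryGroup (Fin 2) ℂ =>
      (X : Matrix (Fin 2) (Fin 2) ℂ)) h
    simpa using this
  have hd' : d = Matrix.trace ((A : Matrix (Fin 2) (Fin 2) ℂ) * (B : Matrix (Fin 2) (Fin 2) ℂ) * (C : Matrix (Fin 2) (Fin 2) ℂ)) := by
    set P : Matrix (Fin 2) (Fin 2) ℂ := (A : Matrix (Fin 2) (Fin 2) ℂ) * (B : Matrix (Fin 2) (Fin 2) ℂ) * (C : Matrix (Fin 2) (Fin 2) ℂ) with hP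
    have hPD : P * (D : Matrix (Fin 2) (Fin 2) ℂ) = 1 := hprod
    have hdP : P.det = 1 := by simp [hP, Matrix.det_mul, hA, hB, hC]
    have hDP : (D : Matrix (Fin 2) (Fin 2) ℂ) = P⁻¹ := (Matrix.inv_eq_right_inv hPD).symm
    rw [hd, hDP, Matrix.inv_def, hdP, Matrix.adjugate_fin_two]
    simp [Matrix.trace_fin_two]
    ring
  rw [ha, hb, hc, hd', hx, hy, hz]
  rw [Matrix.det_fin_two] at hA hB hC
  simp only [Submonoid.coe_mul, Matrix.trace_fin_two, Matrix.mul_apply,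
    Fin.sum_univ_two]
  set A00 := (A : Matrix (Fin 2) (Fin 2) ℂ) 0 0
  set A01 := (A : Matrix (Fin 2) (Fin 2) ℂ) 0 1
  set A10 := (A : Matrix (Fin 2) (Fin 2) ℂ) 1 0
  set A11 := (A : Matrix (Fin 2) (Fin 2) ℂ) 1 1
  set B00 := (B : Matrix (Fin 2) (Fin 2) ℂ) 0 0
  set B01 := (B : Matrix (Fin 2) (Fin 2) ℂ) 0 1
  set B10 := (B : Matrix (Fin 2) (Fin 2) ℂ) 1 0
  set B11 := (B : Matrix (Fin 2) (Fin 2) ℂ) 1 1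
  set C00 := (C : Matrix (Fin 2) (Fin 2) ℂ) 0 0
  set C01 := (C : Matrix (Fin 2) (Fin 2) ℂ) 0 1
  set C10 := (C : Matrix (Fin 2) (Fin 2) ℂ) 1 0
  set C11 := (C : Matrix (Fin 2) (Fin 2) ℂ) 1 1
  linear_combination
    (B00^2*C00*C11 + B00*B01*C10*C11 + B00*B10*C01*C11 + B00*B11*C11^2 + B00*B11*C00^2 + B01*B11*C00*C10 + B10*B11*C00*C01 + B11^2*C00*C11 + (-1)*B11^2 + (-1)*B00^2 + (-1)*B00*B10*C00*C01 + (-2)*B00*B11*C00*C11 + (-1)*B01*B11*C10*C11 + (-1)*B10^2*C01^2 + (-1)*B10*B11*C01*C11 + (-1)*B00*B01*C00*C10 + (-1)*B01^2*C10^2 + (-1)*C11^2 + (-1)*C00^2 + 2) * hA +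
    (A00^2*C00*C11 + A00*A10*C01*C11 + A00*A01*C10*C11 + A10*A11*C00*C01 + A01*A11*C00*C10 + A11^2*C00*C11 + (-1)*A00^2 + (-1)*A11^2 + (-1)*A00*A01*C00*C10 + (-1)*A10*A11*C01*C11 + (-1)*A01^2*C10^2 + (-1)*A01*A11*C10*C11 + (-1)*A00*A10*C00*C01 + (-1)*A10^2*C01^2 + 2 + A01*A10*C11^2 + A01*A10*C00^2 + (-2)*A01*A10*C00*C11 + (-2)*C00*C11) * hB +
    (A01*A11*B00*B10 + A00*A01*B10*B11 + A10*A11*B00*B01 + A00*A10*B01*B11 + (-1)*A00*A10*B00*B01 + (-1)*A10^2*B01^2 + (-1)*A10*A11*B01*B11 + (-1)*A01*A11*B10*B11 + (-1)*A00*A01*B00*B10 + (-1)*A01^2*B10^2 + A01*A10*B00^2 + A00^2*B01*B10 + A11^2*B01*B10 + A01*A10*B11^2 + (-2)*A01*A10*B01*B10 + (-2)*A01*A10 + (-2)*B01*B10) * hC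
end

section
/- For A, B in SU(2) with a = tr(A), b = tr(B), the trace of AB lies in the interval I_{a,b} = [(ab − √((4−a²)(4−b²)))/2, (ab + √((4−a²)(4−b²)))/2]. -/
set_option maxHeartbeats 1000000

theorem su2_entries (M : Matrix (Fin 2) (Fin 2) ℂ) (hU : M ∈ Matrix.unitaryGroup (Fin 2) ℂ)
    (hd : M.det = 1) : M 1 1 = starRingEnd ℂ (M 0 0) ∧ M 1 0 = -starRingEnd ℂ (M 0 1) := by
  have h1 : M * star M = 1 := (Matrix.mem_unitaryGroup_iff).mp hU
  have h2 : star M = M⁻¹ := (Matrix.inv_eq_right_inv h1).symm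
  have h3 : M⁻¹ = M.adjugate := by
    rw [Matrix.inv_def, hd]; simp
  rw [h3, Matrix.adjugate_fin_two] at h2
  constructor
  · have := congrFun (congrFun h2 1) 1
    simp [Matrix.star_apply] at this
    have h := congrArg (starRingEnd ℂ) this
    simp at h
    exact h
  · have := congrFun (congrFun h2 0) 1
    simp [Matrix.star_apply] at this
    have h := congrArg (starRingEnd ℂ) this
    simpa using h

theorem su2_trace_product_mem_interval
    (A B : Matrix.specialUnitaryGroup (Fin 2) ℂ)
    (a b : ℝ)
    (ha : a = (Matrix.trace (A : Matrix (Fin 2) (Fin 2) ℂ)).re)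
    (hb : b = (Matrix.trace (B : Matrix (Fin 2) (Fin 2) ℂ)).re) :
    (Matrix.trace ((A * B : Matrix.specialUnitaryGroup (Fin 2) ℂ) : Matrix (Fin 2) (Fin 2) ℂ)).re
      ∈ Set.Icc ((a * b - Real.sqrt ((4 - a ^ 2) * (4 - b ^ 2))) / 2)
                ((a * b + Real.sqrt ((4 - a ^ 2) * (4 - b ^ 2))) / 2) := by
  have hAmem := A.2
  have hBmem := B.2
  rw [Matrix.mem_specialUnitaryGroup_iff] at hAmem hBmem
  obtain ⟨hAu, hAd⟩ := hAmem
  obtain ⟨hBu, hBd⟩ := hBmem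
  obtain ⟨hM11, hM10⟩ := su2_entries (A : Matrix (Fin 2) (Fin 2) ℂ) hAu hAd
  obtain ⟨hN11, hN10⟩ := su2_entries (B : Matrix (Fin 2) (Fin 2) ℂ) hBu hBd
  obtain ⟨p, q, hpq⟩ : ∃ p q : ℝ, (A : Matrix (Fin 2) (Fin 2) ℂ) 0 0 = ⟨p, q⟩ := ⟨_, _, rfl⟩
  obtain ⟨r, s, hrs⟩ : ∃ r s : ℝ, (A : Matrix (Fin 2) (Fin 2) ℂ) 0 1 = ⟨r, s⟩ := ⟨_, _, rfl⟩
  obtain ⟨P, Q, hPQ⟩ : ∃ P Q : ℝ, (B : Matrix (Fin 2) (Fin 2) ℂ) 0 0 = ⟨P, Q⟩ := ⟨_, _, rfl⟩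
  obtain ⟨R, S, hRS⟩ : ∃ R S : ℝ, (B : Matrix (Fin 2) (Fin 2) ℂ) 0 1 = ⟨R, S⟩ := ⟨_, _, rfl⟩
  have hdetA : p ^ 2 + q ^ 2 + r ^ 2 + s ^ 2 = 1 := by
    have := congrArg Complex.re hAd
    rw [Matrix.det_fin_two, hM11, hM10, hpq, hrs] at this
    simp [Complex.mul_re, Complex.ext_iff] at this
    nlinarith [this]
  have hdetB : P ^ 2 + Q ^ 2 + R ^ 2 + S ^ 2 = 1 := by
    have := congrArg Complex.re hBd
    rw [Matrix.det_fin_two, hN11, hN10, hPQ, hRS] at this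
    simp [Complex.mul_re, Complex.ext_iff] at this
    nlinarith [this]
  have haa : a = 2 * p := by
    rw [ha, Matrix.trace_fin_two, hM11, hpq]; simp; ring
  have hbb : b = 2 * P := by
    rw [hb, Matrix.trace_fin_two, hN11, hPQ]; simp; ring
  have hT : (Matrix.trace ((A * B : Matrix.specialUnitaryGroup (Fin 2) ℂ) :
      Matrix (Fin 2) (Fin 2) ℂ)).re
      = 2 * (p * P - q * Q) - 2 * (r * R + s * S) := by
    have hprod : ((A * B : Matrix.specialUnitaryGroup (Fin 2) ℂ) : Matrix (Fin 2) (Fin 2) ℂ)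
        = (A : Matrix (Fin 2) (Fin 2) ℂ) * (B : Matrix (Fin 2) (Fin 2) ℂ) := rfl
    rw [hprod, Matrix.trace_fin_two, Matrix.mul_apply, Matrix.mul_apply,
      Fin.sum_univ_two, Fin.sum_univ_two, hM11, hM10, hN11, hN10, hpq, hrs, hPQ, hRS]
    simp [Complex.mul_re, Complex.mul_im]
    ring
  rw [hT]
  have hA4 : 4 - a ^ 2 = 4 * (q ^ 2 + r ^ 2 + s ^ 2) := by rw [haa]; nlinarith
  have hB4 : 4 - b ^ 2 = 4 * (Q ^ 2 + R ^ 2 + S ^ 2) := by rw [hbb]; nlinarith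
  have hAnn : 0 ≤ 4 - a ^ 2 := by rw [hA4]; positivity
  have hBnn : 0 ≤ 4 - b ^ 2 := by rw [hB4]; positivity
  set t := Real.sqrt ((4 - a ^ 2) * (4 - b ^ 2)) with ht
  have htnn : 0 ≤ t := Real.sqrt_nonneg _
  have ht2 : t ^ 2 = (4 - a ^ 2) * (4 - b ^ 2) :=
    Real.sq_sqrt (mul_nonneg hAnn hBnn)
  have hcs : (q * Q + r * R + s * S) ^ 2
      ≤ (q ^ 2 + r ^ 2 + s ^ 2) * (Q ^ 2 + R ^ 2 + S ^ 2) := by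
    nlinarith [sq_nonneg (q * R - r * Q), sq_nonneg (q * S - s * Q), sq_nonneg (r * S - s * R)]
  have e1 : (2 * (p * P - q * Q) - 2 * (r * R + s * S) - a * b / 2) ^ 2
      = 4 * (q * Q + r * R + s * S) ^ 2 := by rw [haa, hbb]; ring
  have e2 : (t / 2) ^ 2 = 4 * ((q ^ 2 + r ^ 2 + s ^ 2) * (Q ^ 2 + R ^ 2 + S ^ 2)) := by
    rw [div_pow, ht2, hA4, hB4]; ring
  have hkey : (2 * (p * P - q * Q) - 2 * (r * R + s * S) - a * b / 2) ^ 2 ≤ (t / 2) ^ 2 := by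
    rw [e1, e2]; linarith
  constructor
  · nlinarith [hkey, htnn,
      sq_nonneg (2 * (p * P - q * Q) - 2 * (r * R + s * S) - a * b / 2 + t / 2)]
  · nlinarith [hkey, htnn,
      sq_nonneg (2 * (p * P - q * Q) - 2 * (r * R + s * S) - a * b / 2 - t / 2)]
end

section
/- Let a, b, c, d, x, y, z be real numbers and define the Dehn twist map τ_Z : ℝ³ → ℝ³ by τ_Z(x,y,z) = (cd + ab − z(cb + ad − zx − y) − x, cb + ad − zx − y, z). Then τ_Z preserves the Fricke polynomial: writing κ(x,y,z) = x² + y² + z² + xyz − (ab+cd)x − (ad+bc)y − (ac+bd)z + (a² + b² + c² + d² + abcd − 4), we have κ(τ_Z(x,y,z)) = κ(x,y,z). -/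
theorem dehn_twist_preserves_fricke (a b c d : ℝ)
    (κ : ℝ → ℝ → ℝ → ℝ)
    (hκ : ∀ x y z, κ x y z = x ^ 2 + y ^ 2 + z ^ 2 + x * y * z
        - (a * b + c * d) * x - (a * d + b * c) * y - (a * c + b * d) * z
        + (a ^ 2 + b ^ 2 + c ^ 2 + d ^ 2 + a * b * c * d - 4))
    (τZ : ℝ × ℝ × ℝ → ℝ × ℝ × ℝ)
    (hτ : ∀ x y z, τZ (x, y, z)
        = (c * d + a * b - z * (c * b + a * d - z * x - y) - x,
           c * b + a * d - z * x - y, z)) :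
    ∀ x y z, κ (τZ (x, y, z)).1 (τZ (x, y, z)).2.1 (τZ (x, y, z)).2.2 = κ x y z := by
  intro x y z
  rw [hτ]
  simp only
  rw [hκ, hκ]
  ring
end

section
/- Let a, c be real numbers and set boundary data (a, b, c, d) = (a, a, c, −c). Define the Dehn twist maps on ℝ³: τ_X(x,y,z) = (x, ad+bc − x(ac+bd−xy−z) − y, ac+bd−xy−z), τ_Y(x,y,z) = (ba+cd−yz−x, y, bd+ca − y(ba+cd−yz−x) − z), τ_Z(x,y,z) = (cd+ab − z(cb+ad−zx−y) − x, cb+ad−zx−y, z). Then the two-point set O = {(a²−2, 0, 0), (2−c², 0, 0)} is invariant under each of τ_X, τ_Y, τ_Z. -/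
theorem two_point_set_invariant (a c : ℝ) :
    ∀ (b d : ℝ), b = a → d = -c →
    ∀ (τX τY τZ : ℝ × ℝ × ℝ → ℝ × ℝ × ℝ),
    (∀ x y z, τX (x, y, z)
        = (x, a * d + b * c - x * (a * c + b * d - x * y - z) - y,
           a * c + b * d - x * y - z)) →
    (∀ x y z, τY (x, y, z)
        = (b * a + c * d - y * z - x, y,
           b * d + c * a - y * (b * a + c * d - y * z - x) - z)) →
    (∀ x y z, τZ (x, y, z)
        = (c * d + a * b - z * (c * b + a * d - z * x - y) - x,
           c * b + a * d - z * x - y, z)) →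
    (τX '' {(a ^ 2 - 2, 0, 0), (2 - c ^ 2, 0, 0)} ⊆ {(a ^ 2 - 2, 0, 0), (2 - c ^ 2, 0, 0)}
     ∧ τY '' {(a ^ 2 - 2, 0, 0), (2 - c ^ 2, 0, 0)} ⊆ {(a ^ 2 - 2, 0, 0), (2 - c ^ 2, 0, 0)}
     ∧ τZ '' {(a ^ 2 - 2, 0, 0), (2 - c ^ 2, 0, 0)} ⊆ {(a ^ 2 - 2, 0, 0), (2 - c ^ 2, 0, 0)}) := by
  rintro b d hb hd τX τY τZ hX hY hZ
  subst hb hd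
  refine ⟨?_, ?_, ?_⟩ <;> rintro p ⟨q, (rfl | rfl), rfl⟩
  · left; rw [hX]; simp only [Prod.mk.injEq]; refine ⟨trivial, by ring, by ring⟩
  · right; rw [hX]; simp only [Set.mem_singleton_iff, Prod.mk.injEq]
    refine ⟨trivial, by ring, by ring⟩
  · right; rw [hY]; simp only [Set.mem_singleton_iff, Prod.mk.injEq]
    refine ⟨by ring, trivial, by ring⟩
  · left; rw [hY]; simp only [Prod.mk.injEq]; refine ⟨by ring, trivial, by ring⟩
  · right; rw [hZ]; simp only [Set.mem_singleton_iff, Prod.mk.injEq]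
    refine ⟨by ring, by ring, trivial⟩
  · left; rw [hZ]; simp only [Prod.mk.injEq]; refine ⟨by ring, by ring, trivial⟩
end
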